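/- Let G be a connected r-regular graph on n vertices with λ < 1, let q = 9/10, and consider the BIPS process on G with source v and parameter k = 2. Writing B_t = n − |A_t| for the number of uninfected vertices at time t, for every t ≥ 0: E(B_{t+1}) ≤ (1 − (1 − λ²)·q)·E(B_t) + n·Pr(|A_t| < q·n). -/

import Mathlib

open Finset

noncomputable section

variable {V : Type*}

/-- The random-walk transition matrix `P = A(G)/r` of a graph `G`. -/
def transMatrix [Fintype V] (G : SimpleGraph V) [DecidableRel G.Adj] (r : ℕ) :
    Matrix V V ℝ :=
  Matrix.of fun x y => if G.Adj x y then (r : ℝ)⁻¹ else 0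

/-- `λ = max_{i ≥ 2} |λ_i|`: the largest absolute value of an eigenvalue of the
transition matrix on the space orthogonal to the constant vectors.  For a connected
regular graph this is exactly the second largest eigenvalue in absolute value. -/
def secondEigen [Fintype V] (G : SimpleGraph V) [DecidableRel G.Adj] (r : ℕ) : ℝ :=
  sSup {y : ℝ | ∃ (μ : ℝ) (f : V → ℝ), y = |μ| ∧ f ≠ 0 ∧ (∑ x, f x) = 0 ∧
    (transMatrix G r).mulVec f = μ • f}

/-- `d_A(x) = |N(x) ∩ A|`. -/
def degIn [Fintype V] [DecidableEq V] (G : SimpleGraph V) [DecidableRel G.Adj]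
    (A : Finset V) (x : V) : ℕ :=
  (G.neighborFinset x ∩ A).card

/-- Probability that a vertex `u` choosing `k` uniform random neighbours (with
replacement) in an `r`-regular graph hits the set `A` at least once. -/
def pInf [Fintype V] [DecidableEq V] (G : SimpleGraph V) [DecidableRel G.Adj]
    (r k : ℕ) (A : Finset V) (u : V) : ℝ :=
  1 - (1 - (degIn G A u : ℝ) / (r : ℝ)) ^ k

/-- One-step transition probability of the BIPS process with source `v` and parameter `k`:
each `u ≠ v` is independently infected with probability `pInf`, and `v` is always infected. -/
def bipsStep [Fintype V] [DecidableEq V] (G : SimpleGraph V) [DecidableRel G.Adj]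
    (r k : ℕ) (v : V) (A B : Finset V) : ℝ :=
  if v ∈ B then
    ∏ u ∈ Finset.univ.erase v, (if u ∈ B then pInf G r k A u else 1 - pInf G r k A u)
  else 0

/-- Marginal distribution at time `t` of the Markov chain with one-step transition
probabilities `step` started at `A₀`. -/
def chainProb [Fintype V] [DecidableEq V] (step : Finset V → Finset V → ℝ)
    (A₀ : Finset V) : ℕ → Finset V → ℝ
  | 0, B => if B = A₀ then 1 else 0
  | (t+1), B => ∑ A : Finset V, chainProb step A₀ t A * step A B

/-- Probability of the trajectory `ω 0, ω 1, …, ω T` for the Markov chain with one-step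
transition probabilities `step` started at `A₀`. -/
def trajProb [DecidableEq V] (step : Finset V → Finset V → ℝ) (A₀ : Finset V) (T : ℕ)
    (ω : Fin (T+1) → Finset V) : ℝ :=
  (if ω 0 = A₀ then (1:ℝ) else 0) * ∏ i : Fin T, step (ω i.castSucc) (ω i.succ)

open scoped Classical in
/-- Probability that the trajectory `(A_0, …, A_T)` of the chain satisfies `Q`. -/
def trajPr [Fintype V] [DecidableEq V] (step : Finset V → Finset V → ℝ)
    (A₀ : Finset V) (T : ℕ) (Q : (Fin (T+1) → Finset V) → Prop) : ℝ :=
  ∑ ω : Fin (T+1) → Finset V, if Q ω then trajProb step A₀ T ω else 0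

open scoped Classical in
/-- One-step transition probability of the COBRA process with branching factor `k`:
every vertex of `C` chooses `k` neighbours independently and uniformly at random with
replacement, and `B` is the set of all chosen vertices. -/
def cobraStep [Fintype V] [DecidableEq V] (G : SimpleGraph V) [DecidableRel G.Adj]
    (k : ℕ) (C B : Finset V) : ℝ :=
  ∑ f : ↥C → Fin k → V,
    if (∀ x : ↥C, ∀ i : Fin k, G.Adj (x : V) (f x i)) ∧
        B = Finset.image (fun p : ↥C × Fin k => f p.1 p.2) Finset.univ then
      ∏ x : ↥C, ((G.degree (x : V) : ℝ)⁻¹) ^ k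
    else 0

/-- `Pr(cov(u) > T)`: probability that after `T` rounds of the COBRA process started at
`C_0 = {u}` the sets `C_1, …, C_T` have not yet covered all vertices. -/
def prCovGT [Fintype V] [DecidableEq V] (G : SimpleGraph V) [DecidableRel G.Adj]
    (k : ℕ) (u : V) (T : ℕ) : ℝ :=
  trajPr (cobraStep G k) {u} T (fun ω => ∃ x : V, ∀ s : Fin (T+1), s ≠ 0 → x ∉ ω s)

/-- `Pr(infec(v) > T)`: probability that after `T` rounds of the BIPS process with
source `v` (started from `A_0 = {v}`) the infected set is not yet the whole vertex set. -/
def prInfecGT [Fintype V] [DecidableEq V] (G : SimpleGraph V) [DecidableRel G.Adj]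
    (r k : ℕ) (v : V) (T : ℕ) : ℝ :=
  trajPr (bipsStep G r k v) {v} T (fun ω => ∀ s : Fin (T+1), ω s ≠ Finset.univ)

/-- Probability that a vertex `u` hits `A` when it chooses one uniform random neighbour,
and then with probability `ρ` a second (independent, uniform) neighbour. -/
def pInfRho [Fintype V] [DecidableEq V] (G : SimpleGraph V) [DecidableRel G.Adj]
    (r : ℕ) (ρ : ℝ) (A : Finset V) (u : V) : ℝ :=
  1 - (1 - (degIn G A u : ℝ) / (r : ℝ)) * (1 - ρ * (degIn G A u : ℝ) / (r : ℝ))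

/-- One-step transition probability of the BIPS process with expected branching factor
`1 + ρ` and source `v`. -/
def bipsRhoStep [Fintype V] [DecidableEq V] (G : SimpleGraph V) [DecidableRel G.Adj]
    (r : ℕ) (ρ : ℝ) (v : V) (A B : Finset V) : ℝ :=
  if v ∈ B then
    ∏ u ∈ Finset.univ.erase v,
      (if u ∈ B then pInfRho G r ρ A u else 1 - pInfRho G r ρ A u)
  else 0

open scoped Classical in
/-- One-step transition probability of the COBRA process with expected branching factor
`1 + ρ`: each vertex of `C` chooses one uniform random neighbour and, independently with
probability `ρ`, a second uniform random neighbour; `B` is the set of all chosen vertices. -/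
def cobraRhoStep [Fintype V] [DecidableEq V] (G : SimpleGraph V) [DecidableRel G.Adj]
    (ρ : ℝ) (C B : Finset V) : ℝ :=
  ∑ f : ↥C → V, ∑ g : ↥C → Option V,
    if (∀ x : ↥C, G.Adj (x : V) (f x)) ∧
        (∀ x : ↥C, ∀ y : V, g x = some y → G.Adj (x : V) y) ∧
        B = Finset.image f Finset.univ ∪
          Finset.univ.biUnion (fun x : ↥C => (g x).toFinset) then
      ∏ x : ↥C, ((G.degree (x : V) : ℝ)⁻¹ *
        Option.elim (g x) (1 - ρ) (fun _ => ρ * (G.degree (x : V) : ℝ)⁻¹))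
    else 0

/-- `Pr(cov(u) > T)` for the COBRA process with expected branching factor `1 + ρ`. -/
def prCovRhoGT [Fintype V] [DecidableEq V] (G : SimpleGraph V) [DecidableRel G.Adj]
    (ρ : ℝ) (u : V) (T : ℕ) : ℝ :=
  trajPr (cobraRhoStep G ρ) {u} T (fun ω => ∃ x : V, ∀ s : Fin (T+1), s ≠ 0 → x ∉ ω s)

end

/-!
Given `A_t = A`, a vertex `u ≠ v` stays uninfected exactly when both of its choices miss `A`,
which happens with probability `(1 - d_A(u)/r)² = ((P 1_{Aᶜ}) u)²`; hence
`E(B_{t+1} | A_t = A) ≤ ‖P 1_{Aᶜ}‖²`. Split `1_{Aᶜ}` into its mean `b/n` (where `b = |Aᶜ|`)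
and a mean-zero part: `P` fixes constants and, being symmetric, preserves the mean-zero
vectors, on which it contracts by `λ`. So `‖P 1_{Aᶜ}‖² ≤ λ²(b - b²/n) + b²/n`, which is at
most `(1 - (1 - λ²)q) b` as soon as `|A| ≥ qn`, i.e. `b ≤ (1 - q) n`. If `|A| < qn` the
trivial bound `n` is used instead, and averaging over `A_t` gives the claim.
-/

open Matrix

/-- The probability that the random subset of `s` which contains each `i ∈ s` independently
with probability `p i` is `t ∩ s`. -/
def bernoulliWeight {ι : Type*} [DecidableEq ι] (p : ι → ℝ) (s t : Finset ι) : ℝ :=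
  ∏ i ∈ s, if i ∈ t then p i else 1 - p i

section BernoulliWeight

variable {ι : Type*} [DecidableEq ι] (p : ι → ℝ)

theorem bernoulliWeight_eq_prod_mul_prod_sdiff {s t : Finset ι} (h : t ⊆ s) :
    bernoulliWeight p s t = (∏ i ∈ t, p i) * ∏ i ∈ s \ t, (1 - p i) := by
  rw [bernoulliWeight, prod_ite, filter_mem_eq_inter, inter_eq_right.2 h, filter_notMem_eq_sdiff]

theorem bernoulliWeight_insert_of_notMem {s : Finset ι} {a : ι} (ha : a ∉ s) (t : Finset ι) :
    bernoulliWeight p s (insert a t) = bernoulliWeight p s t :=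
  prod_congr rfl fun i hi => by simp only [mem_insert, ne_of_mem_of_not_mem hi ha, false_or]

theorem sum_powerset_ite_mem_bernoulliWeight {s : Finset ι} {u : ι} (hu : u ∈ s) :
    ∑ t ∈ s.powerset, (if u ∈ t then 0 else bernoulliWeight p s t) = 1 - p u := by
  -- expand `∏ i ∈ s, (p' i + (1 - p i))`, where `p'` kills every subset containing `u`
  have hprod := prod_add (Function.update p u 0) (fun i => 1 - p i) s
  rw [prod_eq_single_of_mem u hu fun i _ hi => by simp [hi]] at hprod
  simp only [Function.update_self, zero_add] at hprod
  rw [hprod]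
  refine sum_congr rfl fun t ht => ?_
  rw [bernoulliWeight_eq_prod_mul_prod_sdiff p (mem_powerset.1 ht)]
  split_ifs with hut
  · rw [prod_eq_zero hut (Function.update_self u 0 p), zero_mul]
  · rw [prod_congr rfl fun i hi => Function.update_of_ne (ne_of_mem_of_not_mem hi hut) 0 p]

theorem sum_powerset_bernoulliWeight_mul_card_sdiff (s : Finset ι) :
    ∑ t ∈ s.powerset, bernoulliWeight p s t * ((s \ t).card : ℝ) = ∑ u ∈ s, (1 - p u) := by
  have hcard (t : Finset ι) : ((s \ t).card : ℝ) = ∑ u ∈ s, if u ∈ t then 0 else 1 := by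
    rw [← filter_notMem_eq_sdiff, card_filter]
    push_cast
    exact sum_congr rfl fun u _ => by split_ifs <;> rfl
  simp_rw [hcard, mul_sum, mul_ite, mul_zero, mul_one]
  rw [sum_comm]
  exact sum_congr rfl fun u hu => sum_powerset_ite_mem_bernoulliWeight p hu

end BernoulliWeight

section Chain

variable {V : Type*} [Fintype V] [DecidableEq V] {step : Finset V → Finset V → ℝ}

theorem chainProb_nonneg (hstep : ∀ A B, 0 ≤ step A B) (A₀ : Finset V) (t : ℕ) (B : Finset V) :
    0 ≤ chainProb step A₀ t B := by
  induction t generalizing B with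
  | zero => unfold chainProb; positivity
  | succ t ih => exact sum_nonneg fun A _ => mul_nonneg (ih A) (hstep A B)

theorem sum_chainProb_succ_mul (A₀ : Finset V) (t : ℕ) (h : Finset V → ℝ) :
    ∑ B, chainProb step A₀ (t + 1) B * h B =
      ∑ A, chainProb step A₀ t A * ∑ B, step A B * h B := by
  simp_rw [chainProb, sum_mul, mul_sum, mul_assoc]
  exact sum_comm

end Chain

section BIPS

variable {V : Type*} [Fintype V] [DecidableEq V] (G : SimpleGraph V) [DecidableRel G.Adj]
  {r : ℕ}

theorem degIn_le (hreg : G.IsRegularOfDegree r) (A : Finset V) (u : V) : degIn G A u ≤ r :=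
  hreg u ▸ card_le_card inter_subset_left

theorem one_sub_degIn_div_mem_Icc (hreg : G.IsRegularOfDegree r) (A : Finset V) (u : V) :
    1 - (degIn G A u : ℝ) / r ∈ Set.Icc 0 1 := by
  have hd : (degIn G A u : ℝ) ≤ r := by exact_mod_cast degIn_le G hreg A u
  constructor
  · rw [sub_nonneg]; exact div_le_one_of_le₀ hd (Nat.cast_nonneg r)
  · linarith [div_nonneg (Nat.cast_nonneg (degIn G A u)) (Nat.cast_nonneg (α := ℝ) r)]

theorem pInf_mem_Icc (hreg : G.IsRegularOfDegree r) (k : ℕ) (A : Finset V) (u : V) :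
    pInf G r k A u ∈ Set.Icc 0 1 := by
  obtain ⟨h0, h1⟩ := one_sub_degIn_div_mem_Icc G hreg A u
  constructor
  · rw [pInf, sub_nonneg]; exact pow_le_one₀ h0 h1
  · rw [pInf, sub_le_self_iff]; exact pow_nonneg h0 k

theorem bipsStep_nonneg (hreg : G.IsRegularOfDegree r) (k : ℕ) (v : V) (A B : Finset V) :
    0 ≤ bipsStep G r k v A B := by
  unfold bipsStep
  split_ifs
  · refine prod_nonneg fun u _ => ?_
    obtain ⟨h0, h1⟩ := pInf_mem_Icc G hreg k A u
    split_ifs <;> linarith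
  · exact le_rfl

theorem sum_bipsStep_mul_card_compl (k : ℕ) (v : V) (A : Finset V) :
    ∑ B, bipsStep G r k v A B * ((Fintype.card V : ℝ) - B.card) =
      ∑ u ∈ univ.erase v, (1 - pInf G r k A u) := by
  set s := univ.erase v
  have hvs : v ∉ s := notMem_erase v univ
  rw [← powerset_univ, ← insert_erase (mem_univ v), sum_powerset_insert hvs,
    ← sum_powerset_bernoulliWeight_mul_card_sdiff]
  have hn : (Fintype.card V : ℝ) = s.card + 1 := by
    rw [← card_univ, ← insert_erase (mem_univ v), card_insert_of_notMem hvs, Nat.cast_succ]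
  rw [sum_eq_zero fun T hT => by
    rw [bipsStep, if_neg fun hv => hvs (mem_powerset.1 hT hv), zero_mul], zero_add]
  refine sum_congr rfl fun T hT => ?_
  have hTs := mem_powerset.1 hT
  rw [bipsStep, if_pos (mem_insert_self v T), ← bernoulliWeight,
    bernoulliWeight_insert_of_notMem _ hvs, card_insert_of_notMem fun hv => hvs (hTs hv), card_sdiff_of_subset hTs, hn]
  push_cast [card_le_card hTs]
  ring

end BIPS

theorem LinearMap.IsSymmetric.norm_sq_apply_le {E : Type*} [NormedAddCommGroup E]
    [InnerProductSpace ℝ E] [FiniteDimensional ℝ E] {T : E →ₗ[ℝ] E} (hT : T.IsSymmetric) {c : ℝ}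
    (hc : ∀ (μ : ℝ) (x : E), x ≠ 0 → T x = μ • x → |μ| ≤ c) (x : E) :
    ‖T x‖ ^ 2 ≤ c ^ 2 * ‖x‖ ^ 2 := by
  set b := hT.eigenvectorBasis rfl
  have hμ (i) : hT.eigenvalues rfl i ^ 2 ≤ c ^ 2 := by
    refine sq_le_sq.2 ((hc _ (b i) (b.orthonormal.ne_zero i) ?_).trans (le_abs_self c))
    exact hT.apply_eigenvectorBasis rfl i
  rw [← b.repr.norm_map x, ← b.repr.norm_map (T x), EuclideanSpace.norm_sq_eq,
    EuclideanSpace.norm_sq_eq, mul_sum]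
  refine sum_le_sum fun i _ => ?_
  rw [hT.eigenvectorBasis_apply_self_apply, norm_mul, mul_pow]
  exact mul_le_mul_of_nonneg_right (by simpa using hμ i) (sq_nonneg _)

section TransMatrix

variable {V : Type*} [Fintype V] (G : SimpleGraph V) [DecidableRel G.Adj] {r : ℕ}

theorem transMatrix_transpose : (transMatrix G r)ᵀ = transMatrix G r := by
  ext x y
  simp [transMatrix, G.adj_comm]

theorem transMatrix_isHermitian : (transMatrix G r).IsHermitian := by
  rw [Matrix.IsHermitian, Matrix.conjTranspose_eq_transpose_of_trivial, transMatrix_transpose]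

theorem secondEigen_nonneg : 0 ≤ secondEigen G r :=
  Real.sSup_nonneg (by rintro _ ⟨μ, -, rfl, -⟩; exact abs_nonneg μ)

theorem abs_le_secondEigen {μ : ℝ} {f : V → ℝ} (hf : f ≠ 0) (hsum : ∑ x, f x = 0)
    (hμ : transMatrix G r *ᵥ f = μ • f) : |μ| ≤ secondEigen G r := by
  let _ := Matrix.linftyOpNormedAddCommGroup (m := V) (n := V) (α := ℝ)
  refine le_csSup ⟨‖transMatrix G r‖, ?_⟩ ⟨μ, f, rfl, hf, hsum, hμ⟩
  rintro _ ⟨μ', f', rfl, hf', -, hμ'⟩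
  have h := linfty_opNorm_mulVec (transMatrix G r) f'
  rw [hμ', norm_smul, Real.norm_eq_abs] at h
  exact le_of_mul_le_mul_right h (norm_pos_iff.2 hf')

theorem transMatrix_mulVec_indicator [DecidableEq V] (A : Finset V) (u : V) :
    (transMatrix G r *ᵥ fun y => if y ∈ A then 1 else 0) u = degIn G A u / r := by
  have h (y : V) : transMatrix G r u y * (if y ∈ A then 1 else 0) =
      if y ∈ G.neighborFinset u ∩ A then (r : ℝ)⁻¹ else 0 := by
    by_cases hy : y ∈ A <;> simp [transMatrix, hy]
  rw [mulVec, dotProduct, sum_congr rfl fun y _ => h y, sum_ite_mem, univ_inter, sum_const,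
    nsmul_eq_mul, degIn, div_eq_mul_inv]

theorem transMatrix_mulVec_one (hreg : G.IsRegularOfDegree r) (hr : r ≠ 0) :
    transMatrix G r *ᵥ 1 = 1 := by
  classical
  ext u
  have h := transMatrix_mulVec_indicator G (r := r) univ u
  simp only [mem_univ, if_true, degIn, inter_univ, G.card_neighborFinset_eq_degree, hreg u] at h
  exact h.trans (div_self (Nat.cast_ne_zero.2 hr))

theorem transMatrix_mulVec_indicator_compl [DecidableEq V] (hreg : G.IsRegularOfDegree r)
    (hr : r ≠ 0) (A : Finset V) (u : V) :
    (transMatrix G r *ᵥ fun y => if y ∈ A then 0 else 1) u = 1 - degIn G A u / r := by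
  have h : (fun y => if y ∈ A then (0 : ℝ) else 1) = 1 - fun y => if y ∈ A then 1 else 0 := by
    ext y; by_cases hy : y ∈ A <;> simp [hy]
  rw [h, mulVec_sub, transMatrix_mulVec_one G hreg hr, Pi.sub_apply,
    transMatrix_mulVec_indicator, Pi.one_apply]

theorem sum_transMatrix_mulVec (hreg : G.IsRegularOfDegree r) (hr : r ≠ 0) (g : V → ℝ) :
    ∑ x, (transMatrix G r *ᵥ g) x = ∑ x, g x := by
  rw [← one_dotProduct, dotProduct_mulVec, ← transMatrix_transpose, vecMul_transpose,
    transMatrix_mulVec_one G hreg hr, one_dotProduct]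

end TransMatrix

section Spectral

variable {V : Type*} [Fintype V] (G : SimpleGraph V) [DecidableRel G.Adj] {r : ℕ}

variable (V) in
def meanZero : Submodule ℝ (EuclideanSpace ℝ V) where
  carrier := {x | ∑ i, x i = 0}
  add_mem' hx hy := by simp_all [sum_add_distrib]
  zero_mem' := by simp
  smul_mem' c x hx := by simp_all [← mul_sum]

theorem sum_sq_transMatrix_mulVec_le_of_sum_eq_zero (hreg : G.IsRegularOfDegree r) (hr : r ≠ 0)
    {g : V → ℝ} (hg : ∑ x, g x = 0) :
    ∑ x, (transMatrix G r *ᵥ g) x ^ 2 ≤ secondEigen G r ^ 2 * ∑ x, g x ^ 2 := by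
  classical
  set T := toEuclideanLin (transMatrix G r)
  have hT : T.IsSymmetric := isSymmetric_toEuclideanLin_iff.2 (transMatrix_isHermitian G)
  have hmaps : ∀ x ∈ meanZero V, T x ∈ meanZero V := fun x hx => by
    simpa [meanZero, T, sum_transMatrix_mulVec G hreg hr] using hx
  have key := (hT.restrict_invariant hmaps).norm_sq_apply_le (c := secondEigen G r) ?_
    ⟨WithLp.toLp 2 g, hg⟩
  · simpa [EuclideanSpace.norm_sq_eq, T] using key
  · rintro μ ⟨x, hx⟩ hx0 hμ
    refine abs_le_secondEigen G (f := WithLp.ofLp x) ?_ hx ?_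
    · simpa using hx0
    · simpa [T] using congrArg (fun y : meanZero V => WithLp.ofLp (y : EuclideanSpace ℝ V)) hμ

theorem sum_sq_transMatrix_mulVec_le [Nonempty V] (hreg : G.IsRegularOfDegree r) (hr : r ≠ 0)
    (f : V → ℝ) :
    ∑ x, (transMatrix G r *ᵥ f) x ^ 2 ≤
      secondEigen G r ^ 2 * (∑ x, f x ^ 2 - (∑ x, f x) ^ 2 / Fintype.card V) +
        (∑ x, f x) ^ 2 / Fintype.card V := by
  set n : ℝ := (Fintype.card V : ℝ)
  have hn : n ≠ 0 := Nat.cast_ne_zero.2 Fintype.card_ne_zero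
  set m := (∑ x, f x) / n
  set g : V → ℝ := f - m • 1
  have hsum_f : ∑ x, f x = n * m := by rw [mul_div_cancel₀ _ hn]
  have hg : ∑ x, g x = 0 := by simp [g, sum_sub_distrib, hsum_f, n]
  have hPf (x : V) : (transMatrix G r *ᵥ f) x = (transMatrix G r *ᵥ g) x + m := by
    simp [g, mulVec_sub, mulVec_smul, transMatrix_mulVec_one G hreg hr]
  have hsq_f :
      ∑ x, (transMatrix G r *ᵥ f) x ^ 2 = ∑ x, (transMatrix G r *ᵥ g) x ^ 2 + n * m ^ 2 := by
    simp_rw [hPf, add_sq, sum_add_distrib, ← sum_mul, ← mul_sum,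
      sum_transMatrix_mulVec G hreg hr, hg]
    simp [n]
  have hsq_g : ∑ x, g x ^ 2 = ∑ x, f x ^ 2 - n * m ^ 2 := by
    simp_rw [g, Pi.sub_apply, Pi.smul_apply, Pi.one_apply, smul_eq_mul, mul_one, sub_sq,
      sum_add_distrib, sum_sub_distrib, ← sum_mul, ← mul_sum, hsum_f, sum_const, card_univ,
      nsmul_eq_mul]
    ring
  have hspec := sum_sq_transMatrix_mulVec_le_of_sum_eq_zero G hreg hr hg
  rw [hsq_g] at hspec
  rw [hsq_f, hsum_f, show (n * m) ^ 2 / n = n * m ^ 2 by field_simp]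
  linarith

end Spectral

section Decay

variable {V : Type*} [Fintype V] [DecidableEq V] (G : SimpleGraph V) [DecidableRel G.Adj]
  {r : ℕ}

theorem one_sub_pInf_two_eq_sq (hreg : G.IsRegularOfDegree r) (hr : r ≠ 0) (A : Finset V)
    (u : V) :
    1 - pInf G r 2 A u = (transMatrix G r *ᵥ fun y => if y ∈ A then 0 else 1) u ^ 2 := by
  rw [transMatrix_mulVec_indicator_compl G hreg hr, pInf]
  ring

theorem sum_one_sub_pInf_two_le_of_card_ge [Nonempty V] (hreg : G.IsRegularOfDegree r)
    (hr : r ≠ 0) (hlam : secondEigen G r < 1) {A : Finset V}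
    (hA : 9 / 10 * (Fintype.card V : ℝ) ≤ A.card) :
    ∑ u, (1 - pInf G r 2 A u) ≤
      (1 - (1 - secondEigen G r ^ 2) * (9 / 10)) * ((Fintype.card V : ℝ) - A.card) := by
  set n : ℝ := (Fintype.card V : ℝ)
  set b : ℝ := n - A.card
  set f : V → ℝ := fun y => if y ∈ A then 0 else 1
  have hn : 0 < n := Nat.cast_pos.2 Fintype.card_pos
  have hb : 0 ≤ b := sub_nonneg.2 (Nat.cast_le.2 (card_le_univ A))
  have hsum_f : ∑ y, f y = b := by
    simp [f, b, n, sum_ite, filter_notMem_eq_sdiff, card_univ_sdiff, Nat.cast_sub (card_le_univ A)]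
  have hsum_sq_f : ∑ y, f y ^ 2 = b := by
    rw [← hsum_f]
    exact sum_congr rfl fun y _ => by by_cases hy : y ∈ A <;> simp [f, hy]
  have hspec := sum_sq_transMatrix_mulVec_le G hreg hr f
  rw [hsum_f, hsum_sq_f] at hspec
  have hb_sq : b ^ 2 / n ≤ b / 10 := by
    rw [div_le_div_iff₀ hn (by norm_num)]
    nlinarith
  have hlam_sq : 0 ≤ 1 - secondEigen G r ^ 2 := by
    nlinarith [secondEigen_nonneg G (r := r)]
  calc ∑ u, (1 - pInf G r 2 A u) = ∑ u, (transMatrix G r *ᵥ f) u ^ 2 :=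
        sum_congr rfl fun u _ => one_sub_pInf_two_eq_sq G hreg hr A u
    _ ≤ secondEigen G r ^ 2 * (b - b ^ 2 / n) + b ^ 2 / n := hspec
    _ ≤ (1 - (1 - secondEigen G r ^ 2) * (9 / 10)) * b := by
        nlinarith [mul_le_mul_of_nonneg_left hb_sq hlam_sq]

theorem sum_one_sub_pInf_two_le (hconn : G.Connected) (hreg : G.IsRegularOfDegree r)
    (hlam : secondEigen G r < 1) (v : V) (A : Finset V) :
    ∑ u ∈ univ.erase v, (1 - pInf G r 2 A u) ≤
      (1 - (1 - secondEigen G r ^ 2) * (9 / 10)) * ((Fintype.card V : ℝ) - A.card) +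
        if (A.card : ℝ) < 9 / 10 * (Fintype.card V : ℝ) then (Fintype.card V : ℝ) else 0 := by
  have : Nonempty V := ⟨v⟩
  have hcard_A : (A.card : ℝ) ≤ Fintype.card V := Nat.cast_le.2 (card_le_univ A)
  have hdecay_nonneg :
      0 ≤ (1 - (1 - secondEigen G r ^ 2) * (9 / 10)) * ((Fintype.card V : ℝ) - A.card) := by
    have := secondEigen_nonneg G (r := r)
    apply mul_nonneg <;> nlinarith
  rcases eq_or_ne r 0 with rfl | hr
  · -- a connected `0`-regular graph has a single vertex
    have : univ.erase v = ∅ := eq_empty_of_forall_notMem fun u hu =>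
      ((hconn.preconnected u v).degree_pos_left (ne_of_mem_erase hu)).ne' (hreg u)
    rw [this, sum_empty]
    split_ifs <;> linarith
  split_ifs with hA
  · have hle_one : ∀ u ∈ univ.erase v, 1 - pInf G r 2 A u ≤ 1 := fun u _ =>
      sub_le_self _ (pInf_mem_Icc G hreg 2 A u).1
    have := sum_le_card_nsmul _ _ _ hle_one
    have hcard : ((univ.erase v).card : ℝ) ≤ Fintype.card V := Nat.cast_le.2 (card_le_univ _)
    simp only [nsmul_eq_mul, mul_one] at this
    linarith
  · calc ∑ u ∈ univ.erase v, (1 - pInf G r 2 A u) ≤ ∑ u, (1 - pInf G r 2 A u) :=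
          sum_le_sum_of_subset_of_nonneg (subset_univ _) fun u _ _ =>
            sub_nonneg.2 (pInf_mem_Icc G hreg 2 A u).2
      _ ≤ _ := sum_one_sub_pInf_two_le_of_card_ge G hreg hr hlam (not_lt.1 hA)
      _ = _ := (add_zero _).symm

end Decay

theorem bips_uninfected_decay_general {V : Type*} [Fintype V] [DecidableEq V]
    (G : SimpleGraph V) [DecidableRel G.Adj] (r : ℕ) (hconn : G.Connected)
    (hreg : G.IsRegularOfDegree r) (hlam : secondEigen G r < 1)
    (v : V) (A₀ : Finset V) (t : ℕ) :
    (∑ B : Finset V, chainProb (bipsStep G r 2 v) A₀ (t+1) B *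
        ((Fintype.card V : ℝ) - (B.card : ℝ))) ≤
      (1 - (1 - secondEigen G r ^ 2) * (9/10)) *
          (∑ B : Finset V, chainProb (bipsStep G r 2 v) A₀ t B *
            ((Fintype.card V : ℝ) - (B.card : ℝ))) +
        (Fintype.card V : ℝ) *
          (∑ B ∈ Finset.univ.filter
              (fun B : Finset V => (B.card : ℝ) < (9/10) * (Fintype.card V : ℝ)),
            chainProb (bipsStep G r 2 v) A₀ t B) := by
  set π := chainProb (bipsStep G r 2 v) A₀ t
  have hπ : ∀ A, 0 ≤ π A := chainProb_nonneg (bipsStep_nonneg G hreg 2 v) A₀ t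
  calc _ = ∑ A, π A * ∑ u ∈ univ.erase v, (1 - pInf G r 2 A u) := by
        simp_rw [sum_chainProb_succ_mul, sum_bipsStep_mul_card_compl]
        rfl
    _ ≤ ∑ A, π A * ((1 - (1 - secondEigen G r ^ 2) * (9 / 10)) *
          ((Fintype.card V : ℝ) - A.card) +
            if (A.card : ℝ) < 9 / 10 * (Fintype.card V : ℝ) then (Fintype.card V : ℝ) else 0) :=
        sum_le_sum fun A _ =>
          mul_le_mul_of_nonneg_left (sum_one_sub_pInf_two_le G hconn hreg hlam v A) (hπ A)
    _ = _ := by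
        simp_rw [mul_add, sum_add_distrib, mul_ite, mul_zero, ← sum_filter, mul_sum]
        congr 1 <;> exact sum_congr rfl fun _ _ => by ring

/-- inequality (16) in the proof of Lemma 9.  For a connected
`r`-regular graph `G` on `n` vertices with `λ < 1`, `q = 9/10`, and the BIPS process
with source `v` and `k = 2` started from `A₀ ∋ v`, writing `B_t = n - |A_t|` for the
number of uninfected vertices:
`E(B_{t+1}) ≤ (1 - (1-λ²)·q)·E(B_t) + n·Pr(|A_t| < q·n)`. -/
theorem bips_uninfected_decay {V : Type*} [Fintype V] [DecidableEq V]
    (G : SimpleGraph V) [DecidableRel G.Adj] (r : ℕ) (hconn : G.Connected)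
    (hreg : G.IsRegularOfDegree r) (hlam : secondEigen G r < 1)
    (v : V) (A₀ : Finset V) (hv : v ∈ A₀) (t : ℕ) :
    (∑ B : Finset V, chainProb (bipsStep G r 2 v) A₀ (t+1) B *
        ((Fintype.card V : ℝ) - (B.card : ℝ))) ≤
      (1 - (1 - secondEigen G r ^ 2) * (9/10)) *
          (∑ B : Finset V, chainProb (bipsStep G r 2 v) A₀ t B *
            ((Fintype.card V : ℝ) - (B.card : ℝ))) +
        (Fintype.card V : ℝ) *
          (∑ B ∈ Finset.univ.filter
              (fun B : Finset V => (B.card : ℝ) < (9/10) * (Fintype.card V : ℝ)),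
            chainProb (bipsStep G r 2 v) A₀ t B) :=
  bips_uninfected_decay_general G r hconn hreg hlam v A₀ t
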